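/- Let 𝓛 be a summable symmetric monoidal category (a symmetric monoidal category with zero morphisms satisfying 0⊗f = f⊗0 = 0, equipped with a summability structure satisfying (S-⊗)). If (f_i ∈ 𝓛(X,Y))_{i∈I} and (g_j ∈ 𝓛(U,V))_{j∈J} are finite summable families, then the family (f_i⊗g_j ∈ 𝓛(X⊗U, Y⊗V))_{(i,j)∈I×J} is summable and (∑_{i∈I} f_i) ⊗ (∑_{j∈J} g_j) = ∑_{(i,j)∈I×J} f_i⊗g_j. -/

import Mathlib

open CategoryTheory Limits MonoidalCategory

universe v u

/-- A pre-summability structure on a category with zero morphisms: a functor `S`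
together with jointly monic natural transformations `π₀, π₁ : S ⟶ 𝟭 C` and a
natural transformation `σ : S ⟶ 𝟭 C`. -/
structure PreSummability (C : Type u) [Category.{v} C] [HasZeroMorphisms C] where
  S : C ⥤ C
  π0 : S ⟶ 𝟭 C
  π1 : S ⟶ 𝟭 C
  σ : S ⟶ 𝟭 C
  jointly_monic : ∀ {Y X : C} (f g : Y ⟶ S.obj X),
    f ≫ π0.app X = g ≫ π0.app X → f ≫ π1.app X = g ≫ π1.app X → f = g

namespace PreSummability

variable {C : Type u} [Category.{v} C] [HasZeroMorphisms C] (P : PreSummability C)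

/-- Two morphisms are summable when they admit a (necessarily unique) witness. -/
def Summable {Y X : C} (f₀ f₁ : Y ⟶ X) : Prop :=
  ∃ h : Y ⟶ P.S.obj X, h ≫ P.π0.app X = f₀ ∧ h ≫ P.π1.app X = f₁

/-- The witness `⟨f₀, f₁⟩` of a summable pair (an arbitrary value if the pair is
not summable). -/
noncomputable def witness {Y X : C} (f₀ f₁ : Y ⟶ X) : Y ⟶ P.S.obj X :=
  @dite _ (P.Summable f₀ f₁) (Classical.propDecidable _) (fun h => h.choose) (fun _ => 0)

/-- The sum `f₀ + f₁ = σ ∘ ⟨f₀, f₁⟩` of a summable pair. -/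
noncomputable def sum {Y X : C} (f₀ f₁ : Y ⟶ X) : Y ⟶ X :=
  P.witness f₀ f₁ ≫ P.σ.app X

/-- Projections indexed by a boolean. -/
def pr (i : Bool) : P.S ⟶ 𝟭 C := if i then P.π1 else P.π0

/-- Axiom (S-com): `π₁` and `π₀` are summable with `π₁ + π₀ = σ`. -/
def SCom : Prop := ∀ X : C,
  P.Summable (P.π1.app X) (P.π0.app X) ∧ P.sum (P.π1.app X) (P.π0.app X) = P.σ.app X

/-- Axiom (S-zero): `0` and `id` are summable with `0 + id = id`. -/
def SZero : Prop := ∀ X : C,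
  P.Summable (0 : X ⟶ X) (𝟙 X) ∧ P.sum (0 : X ⟶ X) (𝟙 X) = 𝟙 X

/-- Axiom (S-wit): if `σ∘f₀` and `σ∘f₁` are summable then `f₀` and `f₁` are summable. -/
def SWit : Prop := ∀ (X Y : C) (f₀ f₁ : X ⟶ P.S.obj Y),
  P.Summable (f₀ ≫ P.σ.app Y) (f₁ ≫ P.σ.app Y) → P.Summable f₀ f₁

end PreSummability

section Monoidal

variable {C : Type u} [Category.{v} C] [HasZeroMorphisms C] [MonoidalCategory C]

/-- The tensor product of zero morphisms is zero. -/
def TensorZero (C : Type u) [Category.{v} C] [HasZeroMorphisms C]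
    [MonoidalCategory C] : Prop :=
  ∀ {X Y U V : C} (f : U ⟶ V),
    ((0 : X ⟶ Y) ⊗ₘ f) = 0 ∧ (f ⊗ₘ (0 : X ⟶ Y)) = 0

/-- Axiom (S-⊗): if `f₀` and `f₁` are summable then so are `f₀ ⊗ g` and `f₁ ⊗ g`,
with `(f₀ + f₁) ⊗ g = f₀ ⊗ g + f₁ ⊗ g`. -/
def PreSummability.STens (P : PreSummability C) : Prop :=
  ∀ {X Y U V : C} (f₀ f₁ : X ⟶ Y) (g : U ⟶ V), P.Summable f₀ f₁ →
    P.Summable (f₀ ⊗ₘ g) (f₁ ⊗ₘ g) ∧ (P.sum f₀ f₁ ⊗ₘ g) = P.sum (f₀ ⊗ₘ g) (f₁ ⊗ₘ g)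

end Monoidal

namespace PreSummability

variable {C : Type u} [Category.{v} C] [HasZeroMorphisms C]

/-- The partial addition on a hom-set induced by the summability structure. -/
noncomputable def addOpt (P : PreSummability C) {X Y : C} (f g : X ⟶ Y) :
    Option (X ⟶ Y) :=
  @dite _ (P.Summable f g) (Classical.propDecidable _) (fun _ => some (P.sum f g))
    (fun _ => none)

/-- The (partial) sum of a finite sequence of morphisms, in the partial
commutative monoid structure of the hom-set. -/
noncomputable def sumListHom (P : PreSummability C) {X Y : C}
    (l : List (X ⟶ Y)) : Option (X ⟶ Y) :=
  l.foldl (fun acc a => acc.bind fun s => P.addOpt s a) (some 0)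

end PreSummability

open PreSummability

/-!
Summability turns every hom-set into a partial commutative monoid: precomposition gives the
unit law from (S-zero) and commutativity from (S-com), while associativity comes from (S-wit),
which provides a witness of a pair of witnesses. In such a monoid a finite sum of finite sums
is the sum of the concatenated list. Since `(· ⊗ g)` preserves binary sums by (S-⊗) and
`(f ⊗ ·)` does too after conjugating by the braiding, both send list sums to list sums, and
the theorem follows by summing the rows `f ⊗ g₁, …, f ⊗ gₘ` first.
-/

namespace PreSummability

section Summable

variable {C : Type u} [Category.{v} C] [HasZeroMorphisms C] (P : PreSummability C)
  {X Y Z : C} {f₀ f₁ f₂ : X ⟶ Y}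

theorem witness_π0 (h : P.Summable f₀ f₁) : P.witness f₀ f₁ ≫ P.π0.app Y = f₀ := by
  rw [witness, dif_pos h]
  exact h.choose_spec.1

theorem witness_π1 (h : P.Summable f₀ f₁) : P.witness f₀ f₁ ≫ P.π1.app Y = f₁ := by
  rw [witness, dif_pos h]
  exact h.choose_spec.2

theorem witness_eq {w : X ⟶ P.S.obj Y} (h0 : w ≫ P.π0.app Y = f₀)
    (h1 : w ≫ P.π1.app Y = f₁) : P.witness f₀ f₁ = w :=
  have h : P.Summable f₀ f₁ := ⟨w, h0, h1⟩
  P.jointly_monic _ _ (by rw [P.witness_π0 h, h0]) (by rw [P.witness_π1 h, h1])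

theorem sum_eq_comp_σ {w : X ⟶ P.S.obj Y} (h0 : w ≫ P.π0.app Y = f₀)
    (h1 : w ≫ P.π1.app Y = f₁) : P.sum f₀ f₁ = w ≫ P.σ.app Y := by
  rw [sum, P.witness_eq h0 h1]

variable {P}

theorem Summable.comp_left (e : Z ⟶ X) (h : P.Summable f₀ f₁) :
    P.Summable (e ≫ f₀) (e ≫ f₁) :=
  ⟨e ≫ P.witness f₀ f₁, by rw [Category.assoc, P.witness_π0 h],
    by rw [Category.assoc, P.witness_π1 h]⟩

theorem comp_sum (e : Z ⟶ X) (h : P.Summable f₀ f₁) :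
    P.sum (e ≫ f₀) (e ≫ f₁) = e ≫ P.sum f₀ f₁ := by
  rw [P.sum_eq_comp_σ (w := e ≫ P.witness f₀ f₁) (by rw [Category.assoc, P.witness_π0 h])
    (by rw [Category.assoc, P.witness_π1 h]), Category.assoc, sum]

theorem witness_map_π0 (k : Y ⟶ Z) (h : P.Summable f₀ f₁) :
    (P.witness f₀ f₁ ≫ P.S.map k) ≫ P.π0.app Z = f₀ ≫ k := by
  rw [Category.assoc, P.π0.naturality k, ← Category.assoc, P.witness_π0 h]
  rfl

theorem witness_map_π1 (k : Y ⟶ Z) (h : P.Summable f₀ f₁) :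
    (P.witness f₀ f₁ ≫ P.S.map k) ≫ P.π1.app Z = f₁ ≫ k := by
  rw [Category.assoc, P.π1.naturality k, ← Category.assoc, P.witness_π1 h]
  rfl

theorem Summable.comp_right (k : Y ⟶ Z) (h : P.Summable f₀ f₁) :
    P.Summable (f₀ ≫ k) (f₁ ≫ k) :=
  ⟨_, witness_map_π0 k h, witness_map_π1 k h⟩

theorem sum_comp (k : Y ⟶ Z) (h : P.Summable f₀ f₁) :
    P.sum (f₀ ≫ k) (f₁ ≫ k) = P.sum f₀ f₁ ≫ k := by
  rw [P.sum_eq_comp_σ (witness_map_π0 k h) (witness_map_π1 k h), Category.assoc,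
    P.σ.naturality k, sum, Category.assoc]
  rfl

theorem summable_zero_left (hzero : P.SZero) (f : X ⟶ Y) : P.Summable 0 f := by
  simpa using (hzero Y).1.comp_left f

theorem zero_sum (hzero : P.SZero) (f : X ⟶ Y) : P.sum 0 f = f := by
  simpa [(hzero Y).2] using comp_sum f (hzero Y).1

theorem Summable.symm (hcom : P.SCom) (h : P.Summable f₀ f₁) : P.Summable f₁ f₀ := by
  simpa [P.witness_π0 h, P.witness_π1 h] using (hcom Y).1.comp_left (P.witness f₀ f₁)

theorem sum_comm (hcom : P.SCom) (h : P.Summable f₀ f₁) : P.sum f₁ f₀ = P.sum f₀ f₁ := by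
  have hσ := comp_sum (P.witness f₀ f₁) (hcom Y).1
  rwa [P.witness_π0 h, P.witness_π1 h, (hcom Y).2] at hσ

theorem summable_zero_right (hzero : P.SZero) (hcom : P.SCom) (f : X ⟶ Y) : P.Summable f 0 :=
  (summable_zero_left hzero f).symm hcom

theorem sum_zero (hzero : P.SZero) (hcom : P.SCom) (f : X ⟶ Y) : P.sum f 0 = f := by
  rw [sum_comm hcom (summable_zero_left hzero f), zero_sum hzero]

/-- (S-wit) makes `⟨f₀, f₁⟩` and `⟨0, f₂⟩` the rows of a `2 × 2` matrix `X ⟶ S (S Y)`; the sum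
of its rows witnesses `⟨f₀, f₁ + f₂⟩`, and the sum of all four entries is computed either way. -/
theorem Summable.assoc (hzero : P.SZero) (hcom : P.SCom) (hwit : P.SWit)
    (h01 : P.Summable f₀ f₁) (h : P.Summable (P.sum f₀ f₁) f₂) :
    P.Summable f₁ f₂ ∧ P.Summable f₀ (P.sum f₁ f₂) ∧
      P.sum (P.sum f₀ f₁) f₂ = P.sum f₀ (P.sum f₁ f₂) := by
  set A := P.witness f₀ f₁
  set B := P.witness 0 f₂
  have hB := summable_zero_left hzero f₂
  have hBσ : B ≫ P.σ.app Y = f₂ := zero_sum hzero f₂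
  have hAB : P.Summable A B := hwit _ _ A B (by rw [hBσ]; exact h)
  have h12 : P.Summable f₁ f₂ := by
    simpa [A, B, P.witness_π1 h01, P.witness_π1 hB] using hAB.comp_right (P.π1.app Y)
  have hsum12 : P.sum f₁ f₂ = P.sum A B ≫ P.π1.app Y := by
    simpa [A, B, P.witness_π1 h01, P.witness_π1 hB] using sum_comp (P.π1.app Y) hAB
  have hf₀ : f₀ = P.sum A B ≫ P.π0.app Y := by
    simpa [A, B, P.witness_π0 h01, P.witness_π0 hB, sum_zero hzero hcom] using
      sum_comp (P.π0.app Y) hAB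
  refine ⟨h12, ⟨P.sum A B, hf₀.symm, hsum12.symm⟩, ?_⟩
  rw [P.sum_eq_comp_σ hf₀.symm hsum12.symm, ← sum_comp (P.σ.app Y) hAB, hBσ]
  rfl

end Summable

section PartialMonoid

variable {C : Type u} [Category.{v} C] [HasZeroMorphisms C] {P : PreSummability C} {X Y : C}

theorem addOpt_of_summable {f g : X ⟶ Y} (h : P.Summable f g) :
    P.addOpt f g = some (P.sum f g) := by
  rw [addOpt, dif_pos h]

theorem addOpt_eq_some_iff {f g s : X ⟶ Y} :
    P.addOpt f g = some s ↔ P.Summable f g ∧ P.sum f g = s := by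
  by_cases h : P.Summable f g <;> simp [addOpt, h]

theorem addOpt_comm (hcom : P.SCom) (f g : X ⟶ Y) : P.addOpt f g = P.addOpt g f := by
  by_cases h : P.Summable f g
  · rw [addOpt_of_summable h, addOpt_of_summable (h.symm hcom), sum_comm hcom h]
  · have h' : ¬ P.Summable g f := fun h' => h (h'.symm hcom)
    simp [addOpt, h, h']

theorem addOpt_assoc (hzero : P.SZero) (hcom : P.SCom) (hwit : P.SWit) (f₀ f₁ f₂ : X ⟶ Y) :
    (P.addOpt f₀ f₁).bind (P.addOpt · f₂) = (P.addOpt f₁ f₂).bind (P.addOpt f₀) := by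
  have forward : ∀ a b c s : X ⟶ Y, (P.addOpt a b).bind (P.addOpt · c) = some s →
      (P.addOpt b c).bind (P.addOpt a) = some s := by
    intro a b c s h
    obtain ⟨t, hab, htc⟩ := Option.bind_eq_some_iff.1 h
    obtain ⟨sab, rfl⟩ := addOpt_eq_some_iff.1 hab
    obtain ⟨stc, rfl⟩ := addOpt_eq_some_iff.1 htc
    obtain ⟨hbc, ha_bc, hassoc⟩ := sab.assoc hzero hcom hwit stc
    rw [addOpt_of_summable hbc, Option.bind_some, addOpt_of_summable ha_bc, hassoc]
  have mirror : ∀ a b c : X ⟶ Y, (P.addOpt b c).bind (P.addOpt a) =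
      (P.addOpt c b).bind (P.addOpt · a) := by
    intro a b c
    simp only [addOpt_comm hcom b c, addOpt_comm hcom a]
  refine Option.ext fun s => ⟨forward f₀ f₁ f₂ s, fun h => ?_⟩
  rw [mirror] at h
  rw [← mirror]
  exact forward f₂ f₁ f₀ s h

theorem sumListHom_concat (l : List (X ⟶ Y)) (x : X ⟶ Y) :
    P.sumListHom (l ++ [x]) = (P.sumListHom l).bind (P.addOpt · x) :=
  List.foldl_concat ..

theorem sumListHom_append (hzero : P.SZero) (hcom : P.SCom) (hwit : P.SWit)
    (l₁ l₂ : List (X ⟶ Y)) :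
    P.sumListHom (l₁ ++ l₂) =
      (P.sumListHom l₁).bind fun a => (P.sumListHom l₂).bind (P.addOpt a) := by
  induction l₂ using List.reverseRecOn with
  | nil =>
    simp [sumListHom, addOpt_of_summable (summable_zero_right hzero hcom _), sum_zero hzero hcom]
  | append_singleton l₂ x ih =>
    simp only [← List.append_assoc, sumListHom_concat, ih, Option.bind_assoc,
      addOpt_assoc hzero hcom hwit]

theorem sumListHom_map {X' Y' : C} (φ : (X ⟶ Y) → (X' ⟶ Y')) (hφ₀ : φ 0 = 0)
    (hφ : ∀ f₀ f₁ : X ⟶ Y, P.Summable f₀ f₁ →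
      P.Summable (φ f₀) (φ f₁) ∧ φ (P.sum f₀ f₁) = P.sum (φ f₀) (φ f₁))
    {l : List (X ⟶ Y)} {s : X ⟶ Y} (h : P.sumListHom l = some s) :
    P.sumListHom (l.map φ) = some (φ s) := by
  induction l using List.reverseRecOn generalizing s with
  | nil =>
    obtain rfl : 0 = s := Option.some_injective _ h
    simp [sumListHom, hφ₀]
  | append_singleton l x ih =>
    obtain ⟨t, ht, htx⟩ := Option.bind_eq_some_iff.1 ((sumListHom_concat l x).symm.trans h)
    obtain ⟨stx, rfl⟩ := addOpt_eq_some_iff.1 htx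
    rw [List.map_append, List.map_singleton, sumListHom_concat, ih ht, Option.bind_some,
      addOpt_of_summable (hφ t x stx).1, (hφ t x stx).2]

theorem sumListHom_flatMap (hzero : P.SZero) (hcom : P.SCom) (hwit : P.SWit) {ι : Type*}
    (l : List ι) (F : ι → List (X ⟶ Y)) (s : ι → (X ⟶ Y))
    (hF : ∀ i ∈ l, P.sumListHom (F i) = some (s i)) :
    P.sumListHom (l.flatMap F) = P.sumListHom (l.map s) := by
  induction l using List.reverseRecOn with
  | nil => rfl
  | append_singleton l x ih =>
    rw [List.flatMap_append, List.flatMap_singleton, sumListHom_append hzero hcom hwit,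
      ih fun i hi => hF i (List.mem_append_left _ hi), hF x (by simp), List.map_append,
      List.map_singleton, sumListHom_concat]
    rfl

end PartialMonoid

theorem STens.tensorHom_sum {C : Type u} [Category.{v} C] [HasZeroMorphisms C]
    [MonoidalCategory C] [BraidedCategory C] {P : PreSummability C} (htens : P.STens)
    {X Y U V : C} (f : X ⟶ Y) {g₀ g₁ : U ⟶ V} (h : P.Summable g₀ g₁) :
    P.Summable (f ⊗ₘ g₀) (f ⊗ₘ g₁) ∧ (f ⊗ₘ P.sum g₀ g₁) = P.sum (f ⊗ₘ g₀) (f ⊗ₘ g₁) := by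
  have braid : ∀ g : U ⟶ V, (f ⊗ₘ g) = (β_ X U).hom ≫ (g ⊗ₘ f) ≫ (β_ Y V).inv := fun g => by
    rw [← BraidedCategory.braiding_naturality_assoc, Iso.hom_inv_id, Category.comp_id]
  obtain ⟨hs, hsum⟩ := htens g₀ g₁ f h
  simp only [braid]
  exact ⟨(hs.comp_right _).comp_left _,
    by rw [comp_sum _ (hs.comp_right _), sum_comp _ hs, hsum]⟩

end PreSummability

theorem stmt15 {C : Type u} [Category.{v} C] [HasZeroMorphisms C]
    [MonoidalCategory C] [SymmetricCategory C] (htz : TensorZero C)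
    (P : PreSummability C) (hcom : P.SCom) (hzero : P.SZero) (hwit : P.SWit)
    (htens : P.STens)
    {X Y U V : C} (lf : List (X ⟶ Y)) (lg : List (U ⟶ V))
    (sf : X ⟶ Y) (sg : U ⟶ V)
    (hf : P.sumListHom lf = some sf) (hg : P.sumListHom lg = some sg) :
    P.sumListHom (lf.flatMap fun f => lg.map fun g => (f ⊗ₘ g)) = some (sf ⊗ₘ sg) := by
  have hrow : ∀ f : X ⟶ Y, P.sumListHom (lg.map (f ⊗ₘ ·)) = some (f ⊗ₘ sg) := fun f =>
    sumListHom_map (f ⊗ₘ ·) (htz f).2 (fun _ _ h => htens.tensorHom_sum f h) hg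
  rw [sumListHom_flatMap hzero hcom hwit lf _ (· ⊗ₘ sg) fun f _ => hrow f]
  exact sumListHom_map (· ⊗ₘ sg) (htz sg).1 (fun f₀ f₁ h => htens f₀ f₁ sg h) hf
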